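/- If λ_i > 0 for all i and S is a rate matrix with zero row sums, then for each i, the i-th entry of 1 − exp((S − D)τ)·1 tends to 1 as τ → ∞. (The speciation time is finite almost surely.) -/

import Mathlib

/-!
Shifting `U = S - diagonal lam` by a large multiple `c • 1` makes it entrywise nonnegative with
row sums at most `c - min lam`, hence of `ℓ∞` operator norm at most `c - min lam`. As the shift
commutes with `U`, `‖exp (τ • U)‖ ≤ exp (-τ c) * exp (τ ‖U + c • 1‖) ≤ exp (-τ min lam) → 0`.
-/

open Matrix Filter Topology

namespace NormedSpace

variable {𝔸 : Type*} [NormedRing 𝔸] [NormOneClass 𝔸] [NormedAlgebra ℝ 𝔸]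

theorem norm_exp_le_exp_norm (x : 𝔸) : ‖exp x‖ ≤ Real.exp ‖x‖ := by
  rw [exp_eq_tsum ℝ, Real.exp_eq_exp_ℝ, exp_eq_tsum ℝ]
  refine (norm_tsum_le_tsum_norm (norm_expSeries_summable' x)).trans ?_
  refine (norm_expSeries_summable' x).tsum_le_tsum (fun n => ?_) (expSeries_summable' ‖x‖)
  rw [norm_smul, smul_eq_mul, Real.norm_of_nonneg (by positivity)]
  exact mul_le_mul_of_nonneg_left (norm_pow_le x n) (by positivity)

theorem norm_exp_le_exp_norm_add_algebraMap_sub [CompleteSpace 𝔸] (x : 𝔸) (c : ℝ) :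
    ‖exp x‖ ≤ Real.exp (‖x + algebraMap ℝ 𝔸 c‖ - c) := by
  let +nondep : NormedAlgebra ℚ 𝔸 := .restrictScalars ℚ ℝ 𝔸
  have hsplit : x = (x + algebraMap ℝ 𝔸 c) + algebraMap ℝ 𝔸 (-c) := by
    rw [map_neg, add_neg_cancel_right]
  rw [hsplit, exp_add_of_commute (Algebra.commutes _ _).symm, ← algebraMap_exp_comm,
    ← Real.exp_eq_exp_ℝ, ← hsplit, sub_eq_add_neg, Real.exp_add]
  refine (norm_mul_le _ _).trans ?_
  rw [norm_algebraMap', Real.norm_of_nonneg (Real.exp_pos _).le]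
  exact mul_le_mul_of_nonneg_right (norm_exp_le_exp_norm _) (Real.exp_pos _).le

end NormedSpace

namespace Matrix

open scoped Norms.Operator

variable {l n : Type*} [Fintype l] [Fintype n]

theorem linfty_opNorm_le_of_nonneg [Nonempty l] {A : Matrix l n ℝ} {r : ℝ}
    (hA : ∀ i j, 0 ≤ A i j) (hrow : ∀ i, ∑ j, A i j ≤ r) : ‖A‖ ≤ r := by
  have hr : 0 ≤ r := (Finset.sum_nonneg fun j _ => hA _ j).trans (hrow (Classical.arbitrary l))
  rw [linfty_opNorm_def, ← NNReal.coe_mk r hr, NNReal.coe_le_coe, Finset.sup_le_iff]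
  intro i _
  rw [← NNReal.coe_le_coe, NNReal.coe_sum]
  simpa only [NNReal.coe_mk, coe_nnnorm, Real.norm_of_nonneg (hA i _)] using hrow i

variable [DecidableEq n]

theorem exists_linfty_opNorm_add_algebraMap_le [Nonempty n] {U : Matrix n n ℝ} {ε : ℝ}
    (hU : ∀ i j, i ≠ j → 0 ≤ U i j) (hrow : ∀ i, ∑ j, U i j ≤ -ε) :
    ∃ c : ℝ, ‖U + algebraMap ℝ (Matrix n n ℝ) c‖ ≤ c - ε := by
  refine ⟨∑ i, |U i i|, linfty_opNorm_le_of_nonneg (fun i j => ?_) (fun i => ?_)⟩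
  · rw [add_apply, algebraMap_matrix_apply]
    split_ifs with hij
    · subst hij
      have := Finset.single_le_sum (fun k _ => abs_nonneg (U k k)) (Finset.mem_univ i)
      simp only [Algebra.algebraMap_self, RingHom.id_apply]
      linarith [neg_abs_le (U i i)]
    · simpa using hU i j hij
  · simp only [add_apply, algebraMap_matrix_apply, Finset.sum_add_distrib, Finset.sum_ite_eq,
      Finset.mem_univ, if_true, Algebra.algebraMap_self, RingHom.id_apply]
    linarith [hrow i]

theorem norm_exp_smul_le_of_rowSum_le [Nonempty n] {U : Matrix n n ℝ} {ε : ℝ}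
    (hU : ∀ i j, i ≠ j → 0 ≤ U i j) (hrow : ∀ i, ∑ j, U i j ≤ -ε) {t : ℝ} (ht : 0 ≤ t) :
    ‖NormedSpace.exp (t • U)‖ ≤ Real.exp (-(ε * t)) := by
  obtain ⟨c, hc⟩ := exists_linfty_opNorm_add_algebraMap_le hU hrow
  have hshift : ‖t • U + algebraMap ℝ (Matrix n n ℝ) (t * c)‖ ≤ t * (c - ε) := by
    rw [Algebra.algebraMap_eq_smul_one] at hc ⊢
    rw [mul_smul, ← smul_add, norm_smul, Real.norm_of_nonneg ht]
    exact mul_le_mul_of_nonneg_left hc ht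
  refine (NormedSpace.norm_exp_le_exp_norm_add_algebraMap_sub _ (t * c)).trans ?_
  exact Real.exp_le_exp.2 (by linarith)

theorem tendsto_exp_smul_atTop_zero {U : Matrix n n ℝ} (hU : ∀ i j, i ≠ j → 0 ≤ U i j)
    (hrow : ∀ i, ∑ j, U i j < 0) : Tendsto (fun t : ℝ => NormedSpace.exp (t • U)) atTop (𝓝 0) := by
  rcases isEmpty_or_nonempty n with hempty | hnonempty
  · exact tendsto_const_nhds.congr fun _ => Subsingleton.elim _ _
  obtain ⟨i₀, hi₀⟩ := Finite.exists_min fun i => -∑ j, U i j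
  have hε : 0 < -∑ j, U i₀ j := neg_pos.2 (hrow i₀)
  refine squeeze_zero_norm' ?_
    (Real.tendsto_exp_neg_atTop_nhds_zero.comp (tendsto_id.const_mul_atTop hε))
  filter_upwards [eventually_ge_atTop 0] with t ht
  exact norm_exp_smul_le_of_rowSum_le hU (fun i => le_neg.1 (hi₀ i)) ht

end Matrix

theorem speciation_time_finite (m : ℕ) (S : Matrix (Fin m) (Fin m) ℝ) (lam : Fin m → ℝ)
    (hS_offdiag : ∀ i j, i ≠ j → 0 ≤ S i j)
    (hS_rows : ∀ i, ∑ j, S i j = 0)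
    (hlam : ∀ i, 0 < lam i) :
    ∀ i : Fin m,
      Tendsto
        (fun τ : ℝ =>
          (((fun _ => (1 : ℝ)) -
              NormedSpace.exp (τ • (S - Matrix.diagonal lam)) *ᵥ (fun _ => (1 : ℝ)) :
            Fin m → ℝ)) i)
        atTop (nhds 1) := by
  intro i
  have hexp := Matrix.tendsto_exp_smul_atTop_zero (U := S - diagonal lam)
    (fun j k hjk => by simpa [diagonal_apply_ne _ hjk] using hS_offdiag j k hjk)
    (fun j => by simpa [Finset.sum_sub_distrib, diagonal_apply, hS_rows j] using hlam j)
  have hcont : Continuous fun M : Matrix (Fin m) (Fin m) ℝ =>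
      (((fun _ => (1 : ℝ)) - M *ᵥ fun _ => (1 : ℝ) : Fin m → ℝ)) i := by
    fun_prop
  simpa [Function.comp_def] using (hcont.tendsto 0).comp hexp
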